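/- Let f be a Bernstein function whose derivative f' is a Stieltjes transform, and let g be a Bernstein function with g(q) > 0 for all q > 0. Then the function q ↦ f(1/g(q)) is completely monotone on (0,∞). -/

import Mathlib

open MeasureTheory Real Set

noncomputable section

/-- A Bernstein function: infinitely differentiable on `(0,∞)`, nonnegative there,
and `(-1)^(n-1) f^(n)(q) ≥ 0` for all `n ≥ 1` and `q > 0`. -/
def IsBernstein (f : ℝ → ℝ) : Prop :=
  ContDiffOn ℝ (⊤ : ℕ∞) f (Ioi 0) ∧
  (∀ q > (0:ℝ), 0 ≤ f q) ∧
  ∀ n : ℕ, 1 ≤ n → ∀ q > (0:ℝ), 0 ≤ (-1 : ℝ) ^ (n - 1) * iteratedDerivWithin n f (Ioi 0) q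

/-- A completely monotone function: infinitely differentiable on `(0,∞)` with
`(-1)^n f^(n)(q) ≥ 0` for all `n ≥ 0` and `q > 0`. -/
def IsCompletelyMonotone (f : ℝ → ℝ) : Prop :=
  ContDiffOn ℝ (⊤ : ℕ∞) f (Ioi 0) ∧
  ∀ n : ℕ, ∀ q > (0:ℝ), 0 ≤ (-1 : ℝ) ^ n * iteratedDerivWithin n f (Ioi 0) q

/-- A (sub)critical branching mechanism:
`Ψ q = a q + b q² + ∫_{(0,∞)} (e^(-qx) - 1 + qx) Pi(dx)` with `a, b ≥ 0` and
`∫ min(x, x²) Pi(dx) < ∞` (`Pi` a measure carried by `(0,∞)`). -/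
def IsBranchingMechanism (Ψ : ℝ → ℝ) : Prop :=
  ∃ (a b : ℝ) (Pi : Measure ℝ), 0 ≤ a ∧ 0 ≤ b ∧ Pi (Iic 0) = 0 ∧
    (∫⁻ x, ENNReal.ofReal (min x (x ^ 2)) ∂Pi) < ⊤ ∧
    ∀ q > (0:ℝ), Ψ q = a * q + b * q ^ 2 + ∫ x, (Real.exp (-q * x) - 1 + q * x) ∂Pi

/-- A Stieltjes transform: `h(q) = b + ∫_{[0,∞)} ν(dt)/(t+q)` with `b ≥ 0` and
`∫ min(1, 1/t) ν(dt) < ∞` (with the convention `min(1, 1/0) = 1`, encoded via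
`ℝ≥0∞`-arithmetic where `(ofReal 0)⁻¹ = ∞`). -/
def IsStieltjes (h : ℝ → ℝ) : Prop :=
  ∃ (b : ℝ) (ν : Measure ℝ), 0 ≤ b ∧ ν (Iio 0) = 0 ∧
    (∫⁻ t, min 1 (ENNReal.ofReal t)⁻¹ ∂ν) < ⊤ ∧
    ∀ q > (0:ℝ), h q = b + ∫ t, (t + q)⁻¹ ∂ν


namespace CIBAux

open Filter Topology

/-- Global variant of complete monotonicity on `(0,∞)`. -/
def CM (F : ℝ → ℝ) : Prop :=
  ContDiffOn ℝ (⊤ : ℕ∞) F (Ioi 0) ∧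
    ∀ n : ℕ, ∀ x : ℝ, 0 < x → 0 ≤ (-1 : ℝ) ^ n * iteratedDeriv n F x

lemma iDW_eq (n : ℕ) (F : ℝ → ℝ) {x : ℝ} (hx : (0:ℝ) < x) :
    iteratedDerivWithin n F (Ioi 0) x = iteratedDeriv n F x := by
  rw [iteratedDerivWithin, iteratedDeriv, iteratedFDerivWithin_of_isOpen n isOpen_Ioi hx]

lemma contDiffOn_deriv' {F : ℝ → ℝ} (hF : ContDiffOn ℝ (⊤ : ℕ∞) F (Ioi 0)) :
    ContDiffOn ℝ (⊤ : ℕ∞) (deriv F) (Ioi 0) :=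
  hF.deriv_of_isOpen isOpen_Ioi (by exact_mod_cast le_top)

lemma contDiffOn_iteratedDeriv' {F : ℝ → ℝ} (hF : ContDiffOn ℝ (⊤ : ℕ∞) F (Ioi 0)) (m : ℕ) :
    ContDiffOn ℝ (⊤ : ℕ∞) (iteratedDeriv m F) (Ioi 0) := by
  induction m generalizing F with
  | zero => simpa [iteratedDeriv_zero] using hF
  | succ m ih => rw [iteratedDeriv_succ']; exact ih (contDiffOn_deriv' hF)

lemma hasDerivAt_iteratedDeriv' {F : ℝ → ℝ} (hF : ContDiffOn ℝ (⊤ : ℕ∞) F (Ioi 0)) (m : ℕ)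
    {x : ℝ} (hx : (0:ℝ) < x) :
    HasDerivAt (iteratedDeriv m F) (iteratedDeriv (m + 1) F x) x := by
  have h : DifferentiableAt ℝ (iteratedDeriv m F) x :=
    ((contDiffOn_iteratedDeriv' hF m).contDiffAt (isOpen_Ioi.mem_nhds hx)).differentiableAt (by simp)
  rw [iteratedDeriv_succ]
  exact h.hasDerivAt


lemma leibniz {u v : ℝ → ℝ} (hu : ContDiffOn ℝ (⊤ : ℕ∞) u (Ioi 0))
    (hv : ContDiffOn ℝ (⊤ : ℕ∞) v (Ioi 0)) :
    ∀ n : ℕ, ∀ x : ℝ, 0 < x →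
      iteratedDeriv n (fun y => u y * v y) x =
        ∑ k ∈ Finset.range (n + 1),
          (n.choose k : ℝ) * (iteratedDeriv k u x * iteratedDeriv (n - k) v x) := by
  intro n
  induction n with
  | zero => intro x hx; simp
  | succ n ih =>
    intro x hx
    have hEq : iteratedDeriv n (fun y => u y * v y) =ᶠ[𝓝 x]
        fun y => ∑ k ∈ Finset.range (n + 1),
          (n.choose k : ℝ) * (iteratedDeriv k u y * iteratedDeriv (n - k) v y) := by
      filter_upwards [isOpen_Ioi.mem_nhds hx] with y hy using ih y hy
    rw [iteratedDeriv_succ, hEq.deriv_eq]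
    have hd : HasDerivAt
        (fun y => ∑ k ∈ Finset.range (n + 1),
          (n.choose k : ℝ) * (iteratedDeriv k u y * iteratedDeriv (n - k) v y))
        (∑ k ∈ Finset.range (n + 1),
          (n.choose k : ℝ) * (iteratedDeriv (k + 1) u x * iteratedDeriv (n - k) v x +
            iteratedDeriv k u x * iteratedDeriv (n - k + 1) v x)) x := by
      apply HasDerivAt.fun_sum
      intro k _
      have hu' := hasDerivAt_iteratedDeriv' hu k hx
      have hv' := hasDerivAt_iteratedDeriv' hv (n - k) hx
      exact (hu'.mul hv').const_mul (n.choose k : ℝ)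
    rw [hd.deriv]
    have key := Finset.sum_choose_succ_mul
      (fun i j => iteratedDeriv i u x * iteratedDeriv j v x) n
    rw [key, ← Finset.sum_add_distrib]
    apply Finset.sum_congr rfl
    intro k hk
    have hk' : k ≤ n := Nat.lt_succ_iff.mp (Finset.mem_range.mp hk)
    rw [show n - k + 1 = n + 1 - k from by omega]
    ring

/-- product of completely monotone functions -/
lemma CM.mul {u v : ℝ → ℝ} (hu : CM u) (hv : CM v) : CM (fun y => u y * v y) := by
  refine ⟨hu.1.mul hv.1, ?_⟩
  intro n x hx
  rw [leibniz hu.1 hv.1 n x hx, Finset.mul_sum]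
  apply Finset.sum_nonneg
  intro k hk
  have hk' : k ≤ n := Nat.lt_succ_iff.mp (Finset.mem_range.mp hk)
  have hs : (-1 : ℝ) ^ n = (-1) ^ k * (-1) ^ (n - k) := by
    rw [← pow_add]; congr 1; omega
  have h1 := hu.2 k x hx
  have h2 := hv.2 (n - k) x hx
  have : (-1 : ℝ) ^ n * ((n.choose k : ℝ) *
      (iteratedDeriv k u x * iteratedDeriv (n - k) v x)) =
      (n.choose k : ℝ) * (((-1 : ℝ) ^ k * iteratedDeriv k u x) *
        ((-1 : ℝ) ^ (n - k) * iteratedDeriv (n - k) v x)) := by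
    rw [hs]; ring
  rw [this]
  exact mul_nonneg (Nat.cast_nonneg _) (mul_nonneg h1 h2)

/-- composition of a completely monotone function with a positive Bernstein function -/
lemma CM.comp {g : ℝ → ℝ} (hgs : ContDiffOn ℝ (⊤ : ℕ∞) g (Ioi 0))
    (hgpos : ∀ x : ℝ, 0 < x → 0 < g x)
    (hgsign : ∀ m : ℕ, 1 ≤ m → ∀ x : ℝ, 0 < x →
      0 ≤ (-1 : ℝ) ^ (m - 1) * iteratedDeriv m g x)
    {F : ℝ → ℝ} (hF : CM F) : CM (fun q => F (g q)) := by
  have hcomp : ∀ {F : ℝ → ℝ}, CM F → ContDiffOn ℝ (⊤ : ℕ∞) (fun q => F (g q)) (Ioi 0) :=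
    fun hF => hF.1.comp hgs (fun x hx => hgpos x hx)
  refine ⟨hcomp hF, ?_⟩
  suffices H : ∀ n : ℕ, ∀ F : ℝ → ℝ, CM F → ∀ x : ℝ, 0 < x →
      0 ≤ (-1 : ℝ) ^ n * iteratedDeriv n (fun q => F (g q)) x by
    intro n x hx; exact H n F hF x hx
  intro n
  induction n using Nat.strong_induction_on with
  | _ n ih =>
    match n with
    | 0 =>
      intro F hFcm x hx
      simpa using hFcm.2 0 (g x) (hgpos x hx)
    | (n + 1) =>
      intro F hFcm x hx
      set N : ℝ → ℝ := fun y => -(deriv F y) with hN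
      have hNs : ContDiffOn ℝ (⊤ : ℕ∞) N (Ioi 0) := (contDiffOn_deriv' hFcm.1).neg
      have hNcm : CM N := by
        refine ⟨hNs, ?_⟩
        intro m y hy
        have : iteratedDeriv m N y = -(iteratedDeriv (m + 1) F y) := by
          rw [hN]
          rw [iteratedDeriv_fun_neg m (deriv F) y, iteratedDeriv_succ']
        rw [this]
        have := hFcm.2 (m + 1) y hy
        rw [pow_succ] at this
        nlinarith [this]
      have hEq : deriv (fun q => F (g q)) =ᶠ[𝓝 x]
          fun y => -(N (g y) * deriv g y) := by
        filter_upwards [isOpen_Ioi.mem_nhds hx] with y hy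
        have h1 : DifferentiableAt ℝ F (g y) :=
          (hFcm.1.contDiffAt (isOpen_Ioi.mem_nhds (hgpos y hy))).differentiableAt
            (by simp)
        have h2 : DifferentiableAt ℝ g y :=
          (hgs.contDiffAt (isOpen_Ioi.mem_nhds hy)).differentiableAt
            (by simp)
        have := deriv_comp y h1 h2
        rw [show (F ∘ g) = fun q => F (g q) from rfl] at this
        rw [this, hN]
        ring
      rw [iteratedDeriv_succ', Filter.EventuallyEq.iteratedDeriv_eq n hEq,
        iteratedDeriv_fun_neg n (fun y => N (g y) * deriv g y) x,
        leibniz (hcomp hNcm) (contDiffOn_deriv' hgs) n x hx]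
      rw [mul_neg, ← neg_mul]
      have hsgn : -(-1 : ℝ) ^ (n + 1) = (-1) ^ n := by
        rw [pow_succ]; ring
      rw [hsgn, Finset.mul_sum]
      apply Finset.sum_nonneg
      intro k hk
      have hk' : k ≤ n := Nat.lt_succ_iff.mp (Finset.mem_range.mp hk)
      have hs : (-1 : ℝ) ^ n = (-1) ^ k * (-1) ^ (n - k) := by
        rw [← pow_add]; congr 1; omega
      have h1 : 0 ≤ (-1 : ℝ) ^ k * iteratedDeriv k (fun q => N (g q)) x :=
        ih k (by omega) N hNcm x hx
      have h2 : 0 ≤ (-1 : ℝ) ^ (n - k) * iteratedDeriv (n - k) (deriv g) x := by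
        have := hgsign (n - k + 1) (by omega) x hx
        rwa [show n - k + 1 - 1 = n - k from rfl, iteratedDeriv_succ'] at this
      have : (-1 : ℝ) ^ n * ((n.choose k : ℝ) *
          (iteratedDeriv k (fun q => N (g q)) x * iteratedDeriv (n - k) (deriv g) x)) =
          (n.choose k : ℝ) * (((-1 : ℝ) ^ k * iteratedDeriv k (fun q => N (g q)) x) *
            ((-1 : ℝ) ^ (n - k) * iteratedDeriv (n - k) (deriv g) x)) := by
        rw [hs]; ring
      rw [this]
      exact mul_nonneg (Nat.cast_nonneg _) (mul_nonneg h1 h2)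


section Inv

/-- real dominating weight `min(1, 1/t)` (value `1` for `t ≤ 1`). -/
def mfun (t : ℝ) : ℝ := (max t 1)⁻¹

lemma mfun_nonneg (t : ℝ) : 0 ≤ mfun t := by
  unfold mfun; positivity

lemma measurable_mfun : Measurable mfun :=
  (measurable_id.max measurable_const).inv

variable {ν : Measure ℝ}

lemma ae_nonneg (hν0 : ν (Iio 0) = 0) : ∀ᵐ t ∂ν, 0 ≤ t := by
  rw [ae_iff]
  have : {a : ℝ | ¬ 0 ≤ a} = Iio 0 := by ext a; simp [not_le]
  rw [this]; exact hν0

lemma integrable_mfun (hν : (∫⁻ t, min 1 (ENNReal.ofReal t)⁻¹ ∂ν) < ⊤) :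
    Integrable mfun ν := by
  refine ⟨measurable_mfun.aestronglyMeasurable, ?_⟩
  rw [hasFiniteIntegral_iff_ofReal (Eventually.of_forall mfun_nonneg)]
  refine lt_of_le_of_lt (lintegral_mono fun t => ?_) hν
  rcases le_total t 1 with ht | ht
  · rw [mfun, max_eq_right ht, inv_one, ENNReal.ofReal_one]
    refine le_min le_rfl ?_
    exact ENNReal.one_le_inv.mpr (ENNReal.ofReal_le_one.mpr ht)
  · have ht0 : (0:ℝ) < t := lt_of_lt_of_le one_pos ht
    rw [mfun, max_eq_left ht, ENNReal.ofReal_inv_of_pos ht0]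
    refine le_min ?_ le_rfl
    rw [ENNReal.inv_le_one]
    exact ENNReal.one_le_ofReal.mpr ht

/-- integrand of the `n`-th derivative of the Stieltjes part. -/
def psi (n : ℕ) (x t : ℝ) : ℝ := (x⁻¹) ^ (n + 1) - (t / (t * x + 1)) ^ (n + 1)

/-- the `n`-th derivative (up to sign/factorial) of the Stieltjes part. -/
def phi (ν : Measure ℝ) (n : ℕ) (x : ℝ) : ℝ := ∫ t, psi n x t ∂ν

lemma measurable_psi (n : ℕ) (x : ℝ) : Measurable (psi n x) :=
  measurable_const.sub
    ((measurable_id.div ((measurable_id.mul_const x).add_const 1)).pow_const _)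

lemma c_le_a {t x : ℝ} (ht : 0 ≤ t) (hx : 0 < x) : t / (t * x + 1) ≤ x⁻¹ := by
  have htx : (0:ℝ) < t * x + 1 := by positivity
  rw [div_le_iff₀ htx]
  have h : x⁻¹ * (t * x + 1) = t + x⁻¹ := by field_simp
  rw [h]
  have : 0 < x⁻¹ := inv_pos.mpr hx
  linarith

lemma inv_le_aux {t x : ℝ} (ht : 0 ≤ t) (hx : 0 < x) :
    (t * x + 1)⁻¹ ≤ max 1 x⁻¹ * mfun t := by
  have htx : (0:ℝ) < t * x + 1 := by positivity
  rcases le_total t 1 with h | h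
  · rw [mfun, max_eq_right h, inv_one, mul_one]
    have h1 : (t * x + 1)⁻¹ ≤ 1 := inv_le_one_of_one_le₀ (by nlinarith [mul_nonneg ht hx.le])
    exact h1.trans (le_max_left _ _)
  · rw [mfun, max_eq_left h]
    have ht0 : (0:ℝ) < t := lt_of_lt_of_le one_pos h
    have h1 : (t * x + 1)⁻¹ ≤ (t * x)⁻¹ := by
      apply inv_anti₀ (by positivity) (by linarith)
    calc (t * x + 1)⁻¹ ≤ (t * x)⁻¹ := h1
      _ = x⁻¹ * t⁻¹ := by rw [mul_inv]; ring
      _ ≤ max 1 x⁻¹ * t⁻¹ :=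
          mul_le_mul_of_nonneg_right (le_max_right _ _) (by positivity)

lemma pow_sub_pow_le' {a c : ℝ} (hc : 0 ≤ c) (hca : c ≤ a) (m : ℕ) :
    a ^ (m + 1) - c ^ (m + 1) ≤ ((m : ℝ) + 1) * a ^ m * (a - c) := by
  induction m with
  | zero => simp
  | succ m ih =>
    have ha : 0 ≤ a := hc.trans hca
    have hpow : c ^ (m + 1) ≤ a ^ (m + 1) := pow_le_pow_left₀ hc hca _
    have h1 : a ^ (m + 1 + 1) - c ^ (m + 1 + 1)
        = a * (a ^ (m + 1) - c ^ (m + 1)) + (a - c) * c ^ (m + 1) := by ring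
    have h2 : a * (a ^ (m + 1) - c ^ (m + 1)) ≤ a * (((m : ℝ) + 1) * a ^ m * (a - c)) :=
      mul_le_mul_of_nonneg_left ih ha
    have h3 : (a - c) * c ^ (m + 1) ≤ (a - c) * a ^ (m + 1) :=
      mul_le_mul_of_nonneg_left hpow (by linarith)
    have h4 : a * (((m : ℝ) + 1) * a ^ m * (a - c)) + (a - c) * a ^ (m + 1)
        = ((m : ℝ) + 1 + 1) * a ^ (m + 1) * (a - c) := by ring
    push_cast
    linarith

lemma psi_nonneg (n : ℕ) {x t : ℝ} (hx : 0 < x) (ht : 0 ≤ t) : 0 ≤ psi n x t := by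
  unfold psi
  have h1 : (0:ℝ) ≤ t / (t * x + 1) := by positivity
  have := pow_le_pow_left₀ h1 (c_le_a ht hx) (n + 1)
  linarith

lemma psi_le (n : ℕ) {x t : ℝ} (hx : 0 < x) (ht : 0 ≤ t) :
    psi n x t ≤ (((n : ℝ) + 1) * (x⁻¹) ^ (n + 1) * max 1 x⁻¹) * mfun t := by
  have htx : (0:ℝ) < t * x + 1 := by positivity
  have h1 : (0:ℝ) ≤ t / (t * x + 1) := by positivity
  have h2 := pow_sub_pow_le' h1 (c_le_a ht hx) n
  have hac : x⁻¹ - t / (t * x + 1) = x⁻¹ * (t * x + 1)⁻¹ := by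
    field_simp
    ring
  calc psi n x t ≤ ((n : ℝ) + 1) * (x⁻¹) ^ n * (x⁻¹ - t / (t * x + 1)) := h2
    _ = ((n : ℝ) + 1) * (x⁻¹) ^ (n + 1) * (t * x + 1)⁻¹ := by rw [hac]; ring
    _ ≤ ((n : ℝ) + 1) * (x⁻¹) ^ (n + 1) * (max 1 x⁻¹ * mfun t) :=
        mul_le_mul_of_nonneg_left (inv_le_aux ht hx) (by positivity)
    _ = _ := by ring

lemma integrable_psi (hν0 : ν (Iio 0) = 0)
    (hνfin : (∫⁻ t, min 1 (ENNReal.ofReal t)⁻¹ ∂ν) < ⊤)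
    (n : ℕ) {x : ℝ} (hx : 0 < x) : Integrable (psi n x) ν := by
  apply Integrable.mono'
    ((integrable_mfun hνfin).const_mul (((n : ℝ) + 1) * (x⁻¹) ^ (n + 1) * max 1 x⁻¹))
    (measurable_psi n x).aestronglyMeasurable
  filter_upwards [ae_nonneg hν0] with t ht
  rw [Real.norm_eq_abs, abs_of_nonneg (psi_nonneg n hx ht)]
  exact psi_le n hx ht

lemma psi_hasDeriv (n : ℕ) {x t : ℝ} (hx : 0 < x) (ht : 0 ≤ t) :
    HasDerivAt (fun y => psi n y t) (-((n : ℝ) + 1) * psi (n + 1) x t) x := by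
  have htx : (0:ℝ) < t * x + 1 := by positivity
  have h1 := (hasDerivAt_inv hx.ne').fun_pow (n + 1)
  simp only [Nat.add_sub_cancel] at h1
  have hb : HasDerivAt (fun y : ℝ => t * y + 1) t x := by
    simpa using ((hasDerivAt_id x).const_mul t).add_const 1
  have hinv := hb.fun_inv htx.ne'
  have h2 := (hinv.const_mul t).fun_pow (n + 1)
  simp only [Nat.add_sub_cancel] at h2
  have key := h1.fun_sub h2
  have hfun : (fun y : ℝ => (y⁻¹) ^ (n + 1) - (t * (t * y + 1)⁻¹) ^ (n + 1))
      = fun y => psi n y t := by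
    funext y; unfold psi; rw [div_eq_mul_inv]
  rw [hfun] at key
  refine key.congr_deriv ?_
  unfold psi
  have hxne : x ≠ 0 := hx.ne'
  have htxne : t * x + 1 ≠ 0 := htx.ne'
  push_cast
  rw [show x⁻¹ ^ (n + 1 + 1) = x⁻¹ ^ n * (x ^ 2)⁻¹ by rw [pow_add, inv_pow]; ring,
    show (t / (t * x + 1)) ^ (n + 1 + 1) = (t * (t * x + 1)⁻¹) ^ n * (t ^ 2 / (t * x + 1) ^ 2) by
      rw [div_eq_mul_inv, div_eq_mul_inv, ← inv_pow]; ring]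
  ring


lemma phi_nonneg (hν0 : ν (Iio 0) = 0) (n : ℕ) {x : ℝ} (hx : 0 < x) : 0 ≤ phi ν n x :=
  integral_nonneg_of_ae
    (by filter_upwards [ae_nonneg hν0] with t ht using psi_nonneg n hx ht)

lemma hasDerivAt_phi (hν0 : ν (Iio 0) = 0)
    (hνfin : (∫⁻ t, min 1 (ENNReal.ofReal t)⁻¹ ∂ν) < ⊤)
    (n : ℕ) {x₀ : ℝ} (hx₀ : 0 < x₀) :
    HasDerivAt (phi ν n) (-((n : ℝ) + 1) * phi ν (n + 1) x₀) x₀ := by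
  have hball : ∀ x ∈ Metric.ball x₀ (x₀ / 2), 0 < x ∧ x⁻¹ ≤ (x₀ / 2)⁻¹ := by
    intro x hxb
    rw [Metric.mem_ball, Real.dist_eq, abs_lt] at hxb
    have hx2 : x₀ / 2 < x := by linarith [hxb.1]
    have h0 : 0 < x := lt_trans (by linarith) hx2
    exact ⟨h0, inv_anti₀ (by linarith) hx2.le⟩
  have main := hasDerivAt_integral_of_dominated_loc_of_deriv_le (μ := ν)
    (F := fun x t => psi n x t) (F' := fun x t => -((n : ℝ) + 1) * psi (n + 1) x t)
    (bound := fun t => (((n : ℝ) + 1) *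
      (((n : ℝ) + 1 + 1) * ((x₀ / 2)⁻¹) ^ (n + 1 + 1) * max 1 (x₀ / 2)⁻¹)) * mfun t)
    (Metric.ball_mem_nhds x₀ (half_pos hx₀))
    (Eventually.of_forall fun x => (measurable_psi n x).aestronglyMeasurable)
    (integrable_psi hν0 hνfin n hx₀)
    (((measurable_psi (n + 1) x₀).const_mul _).aestronglyMeasurable)
    ?_ ((integrable_mfun hνfin).const_mul _) ?_
  · rcases main with ⟨-, hd⟩
    have heq : (∫ t, -((n : ℝ) + 1) * psi (n + 1) x₀ t ∂ν)
        = -((n : ℝ) + 1) * phi ν (n + 1) x₀ := integral_const_mul _ _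
    rwa [heq] at hd
  · filter_upwards [ae_nonneg hν0] with t ht
    intro x hxb
    obtain ⟨h0, hinvle⟩ := hball x hxb
    have hn : ‖-((n : ℝ) + 1) * psi (n + 1) x t‖ = ((n : ℝ) + 1) * psi (n + 1) x t := by
      rw [Real.norm_eq_abs, abs_mul, abs_neg,
        abs_of_nonneg (by positivity : (0:ℝ) ≤ (n : ℝ) + 1),
        abs_of_nonneg (psi_nonneg (n + 1) h0 ht)]
    rw [hn]
    have hle := psi_le (n + 1) h0 ht
    push_cast at hle
    have hx20 : (0:ℝ) < x₀ / 2 := half_pos hx₀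
    have hinv0 : (0:ℝ) ≤ x⁻¹ := inv_nonneg.mpr h0.le
    have h1 : (x⁻¹) ^ (n + 1 + 1) ≤ ((x₀ / 2)⁻¹) ^ (n + 1 + 1) :=
      pow_le_pow_left₀ hinv0 hinvle _
    have h2 : max 1 x⁻¹ ≤ max 1 (x₀ / 2)⁻¹ := max_le_max le_rfl hinvle
    have h3 : (0:ℝ) ≤ (n : ℝ) + 1 + 1 := by positivity
    have h4 : (0:ℝ) ≤ max 1 x⁻¹ := le_trans zero_le_one (le_max_left _ _)
    have hb0 : (0:ℝ) ≤ ((n : ℝ) + 1 + 1) * ((x₀ / 2)⁻¹) ^ (n + 1 + 1) :=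
      mul_nonneg h3 (pow_nonneg (inv_nonneg.mpr hx20.le) _)
    have hA : ((n : ℝ) + 1 + 1) * (x⁻¹) ^ (n + 1 + 1) * max 1 x⁻¹
        ≤ ((n : ℝ) + 1 + 1) * ((x₀ / 2)⁻¹) ^ (n + 1 + 1) * max 1 (x₀ / 2)⁻¹ :=
      mul_le_mul (mul_le_mul_of_nonneg_left h1 h3) h2 h4 hb0
    calc ((n : ℝ) + 1) * psi (n + 1) x t
        ≤ ((n : ℝ) + 1) * ((((n : ℝ) + 1 + 1) * (x⁻¹) ^ (n + 1 + 1) * max 1 x⁻¹) * mfun t) :=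
          mul_le_mul_of_nonneg_left hle (by positivity)
      _ ≤ ((n : ℝ) + 1) * ((((n : ℝ) + 1 + 1) * ((x₀ / 2)⁻¹) ^ (n + 1 + 1)
            * max 1 (x₀ / 2)⁻¹) * mfun t) :=
          mul_le_mul_of_nonneg_left
            (mul_le_mul_of_nonneg_right hA (mfun_nonneg t)) (by positivity)
      _ = (((n : ℝ) + 1) * (((n : ℝ) + 1 + 1) * ((x₀ / 2)⁻¹) ^ (n + 1 + 1)
            * max 1 (x₀ / 2)⁻¹)) * mfun t := by ring
  · filter_upwards [ae_nonneg hν0] with t ht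
    intro x hxb
    exact psi_hasDeriv n (hball x hxb).1 ht

lemma iteratedDeriv_G (hν0 : ν (Iio 0) = 0)
    (hνfin : (∫⁻ t, min 1 (ENNReal.ofReal t)⁻¹ ∂ν) < ⊤) (b : ℝ) :
    ∀ m : ℕ, ∀ x : ℝ, 0 < x →
      iteratedDeriv m (fun y => b * (y⁻¹) ^ 2 + phi ν 0 y) x
        = (-1 : ℝ) ^ m * (((m + 1).factorial : ℝ) * b * (x⁻¹) ^ (m + 2)
            + (m.factorial : ℝ) * phi ν m x) := by
  intro m
  induction m with
  | zero => intro x hx; simp [Nat.factorial]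
  | succ m ih =>
    intro x hx
    have hEq : iteratedDeriv m (fun y => b * (y⁻¹) ^ 2 + phi ν 0 y) =ᶠ[𝓝 x]
        fun y => (-1 : ℝ) ^ m * (((m + 1).factorial : ℝ) * b * (y⁻¹) ^ (m + 2)
          + (m.factorial : ℝ) * phi ν m y) := by
      filter_upwards [isOpen_Ioi.mem_nhds hx] with y hy using ih y hy
    rw [iteratedDeriv_succ, hEq.deriv_eq]
    have hpow : HasDerivAt (fun y : ℝ => (y⁻¹) ^ (m + 2))
        (((m + 2 : ℕ) : ℝ) * (x⁻¹) ^ (m + 1) * (-(x ^ 2)⁻¹)) x := by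
      have := (hasDerivAt_inv hx.ne').fun_pow (m + 2)
      rw [show m + 2 - 1 = m + 1 from rfl] at this
      exact this
    have hphi := hasDerivAt_phi hν0 hνfin m hx
    have hd := ((hpow.const_mul (((m + 1).factorial : ℝ) * b)).fun_add
      (hphi.const_mul ((m.factorial : ℝ)))).const_mul ((-1 : ℝ) ^ m)
    rw [hd.deriv]
    have e1 : (x⁻¹ : ℝ) ^ (m + 1 + 2) = (x⁻¹) ^ (m + 1) * (x ^ 2)⁻¹ := by
      rw [pow_add, inv_pow, inv_pow]
    rw [e1]
    push_cast [Nat.factorial_succ]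
    ring

lemma CM_inv {f : ℝ → ℝ} (hfs : ContDiffOn ℝ (⊤ : ℕ∞) f (Ioi 0))
    (hf0 : ∀ q : ℝ, 0 < q → 0 ≤ f q)
    {b : ℝ} (hb : 0 ≤ b) (hν0 : ν (Iio 0) = 0)
    (hνfin : (∫⁻ t, min 1 (ENNReal.ofReal t)⁻¹ ∂ν) < ⊤)
    (hf' : ∀ q : ℝ, 0 < q → deriv f q = b + ∫ t, (t + q)⁻¹ ∂ν) :
    CM (fun x => f (1 / x)) := by
  have hdiv : ContDiffOn ℝ (⊤ : ℕ∞) (fun x : ℝ => 1 / x) (Ioi 0) :=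
    contDiffOn_const.div contDiffOn_id (fun x hx => ne_of_gt hx)
  have hsmooth : ContDiffOn ℝ (⊤ : ℕ∞) (fun x : ℝ => f (1 / x)) (Ioi 0) :=
    hfs.comp hdiv (fun x (hx : 0 < x) => (one_div_pos.mpr hx : 1 / x ∈ Ioi 0))
  refine ⟨hsmooth, ?_⟩
  have hG : ∀ y : ℝ, 0 < y →
      deriv (fun z => f (1 / z)) y = -(b * (y⁻¹) ^ 2 + phi ν 0 y) := by
    intro y hy
    have hy' : (0:ℝ) < y⁻¹ := inv_pos.mpr hy
    have hdf' : HasDerivAt f (deriv f (1 / y)) (1 / y) := by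
      rw [one_div]
      exact ((hfs.contDiffAt (isOpen_Ioi.mem_nhds hy')).differentiableAt
        (by simp)).hasDerivAt
    have hinv : HasDerivAt (fun z : ℝ => 1 / z) (-(y ^ 2)⁻¹) y := by
      simpa [one_div] using hasDerivAt_inv hy.ne'
    have hcomp := hdf'.comp y hinv
    have hder : deriv (fun z => f (1 / z)) y = deriv f (1 / y) * -(y ^ 2)⁻¹ := by
      have h := hcomp.deriv
      rw [show (f ∘ fun z : ℝ => 1 / z) = fun z => f (1 / z) from rfl] at h
      exact h
    rw [hder, hf' (1 / y) (one_div_pos.mpr hy), one_div]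
    have hint : (∫ t, (t + y⁻¹)⁻¹ ∂ν) * (y ^ 2)⁻¹ = phi ν 0 y := by
      rw [← integral_mul_const]
      apply integral_congr_ae
      filter_upwards [ae_nonneg hν0] with t ht
      have h1 : (0:ℝ) < t * y + 1 := by positivity
      have h2 : (0:ℝ) < t + y⁻¹ := by positivity
      unfold psi
      have h1' := h1.ne'
      simp only [zero_add, pow_one]
      field_simp
      ring
    rw [← hint, show ((y⁻¹ : ℝ)) ^ 2 = (y ^ 2)⁻¹ from inv_pow y 2]
    ring
  intro n x hx
  match n with
  | 0 => simpa using hf0 (1 / x) (one_div_pos.mpr hx)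
  | (n + 1) =>
    have hEv : deriv (fun z => f (1 / z)) =ᶠ[𝓝 x]
        fun y => -(b * (y⁻¹) ^ 2 + phi ν 0 y) := by
      filter_upwards [isOpen_Ioi.mem_nhds hx] with y hy using hG y hy
    rw [iteratedDeriv_succ', Filter.EventuallyEq.iteratedDeriv_eq n hEv,
      iteratedDeriv_fun_neg n (fun y => b * (y⁻¹) ^ 2 + phi ν 0 y) x,
      iteratedDeriv_G hν0 hνfin b n x hx]
    have hE1 : 0 ≤ ((n + 1).factorial : ℝ) * b * (x⁻¹) ^ (n + 2) :=
      mul_nonneg (mul_nonneg (Nat.cast_nonneg _) hb)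
        (pow_nonneg (inv_nonneg.mpr hx.le) _)
    have hE2 : 0 ≤ (n.factorial : ℝ) * phi ν n x :=
      mul_nonneg (Nat.cast_nonneg _) (phi_nonneg hν0 n hx)
    set E := ((n + 1).factorial : ℝ) * b * (x⁻¹) ^ (n + 2)
      + (n.factorial : ℝ) * phi ν n x with hEdef
    have key : (-1 : ℝ) ^ (n + 1) * -((-1 : ℝ) ^ n * E) = E := by
      have h1 : ((-1 : ℝ)) ^ (n + 1) * (-1) ^ (n + 1) = 1 := by
        rw [← pow_add]
        exact Even.neg_one_pow ⟨n + 1, by ring⟩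
      calc (-1 : ℝ) ^ (n + 1) * -((-1 : ℝ) ^ n * E)
          = ((-1 : ℝ) ^ (n + 1) * (-1) ^ (n + 1)) * E := by rw [pow_succ]; ring
        _ = 1 * E := by rw [h1]
        _ = E := one_mul E
    rw [key]
    exact add_nonneg hE1 hE2

end Inv

end CIBAux


/-- If `f` is a Bernstein function whose derivative is a Stieltjes
transform and `g` is a positive Bernstein function, then `q ↦ f(1/g(q))` is
completely monotone. -/
theorem comp_inv_bernstein_isCompletelyMonotone
    (f : ℝ → ℝ) (hf : IsBernstein f) (hf' : IsStieltjes (deriv f))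
    (g : ℝ → ℝ) (hg : IsBernstein g) (hgpos : ∀ q > (0:ℝ), 0 < g q) :
    IsCompletelyMonotone (fun q => f (1 / g q)) := by
  obtain ⟨hfs, hf0, -⟩ := hf
  obtain ⟨b, ν, hb, hν0, hνfin, hf'eq⟩ := hf'
  obtain ⟨hgs, -, hgsign⟩ := hg
  have hFcm : CIBAux.CM (fun x => f (1 / x)) :=
    CIBAux.CM_inv hfs (fun q hq => hf0 q hq) hb hν0 hνfin (fun q hq => hf'eq q hq)
  have hgsign' : ∀ m : ℕ, 1 ≤ m → ∀ x : ℝ, 0 < x →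
      0 ≤ (-1 : ℝ) ^ (m - 1) * iteratedDeriv m g x := by
    intro m hm x hx
    rw [← CIBAux.iDW_eq m g hx]
    exact hgsign m hm x hx
  have hcm := CIBAux.CM.comp hgs (fun x hx => hgpos x hx) hgsign' hFcm
  refine ⟨hcm.1, ?_⟩
  intro n q hq
  rw [CIBAux.iDW_eq n _ hq]
  exact hcm.2 n q hq
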